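/- Let (X,d) be a complete metric space, let f : X → (−∞,∞] be lower semicontinuous, and let x̄ be a point with f(x̄) finite at which the slope is zero: |∇f|(x̄) = 0. If the singleton set {x̄} is identifiable for f at x̄, then x̄ is a sharp local minimizer: there exists ε > 0 such that f(x) ≥ f(x̄) + ε·d(x,x̄) for all x near x̄. -/

import Mathlib

open Filter Topology
open scoped ENNReal NNReal

/-- The slope `|∇f|(x)`: the infimum of all `δ > 0` such that `x` is a local minimizer of
`f + δ·d(·,x)`; it equals `∞` at points where `f x = ⊤`. -/
noncomputable def slopeM {X : Type*} [MetricSpace X] (f : X → EReal) (x : X) : ℝ≥0∞ :=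
  if f x = ⊤ then ⊤
  else sInf {δ : ℝ≥0∞ | ∃ c : ℝ, 0 < c ∧ δ = ENNReal.ofReal c ∧
    ∀ᶠ z in 𝓝 x, f x ≤ f z + ((c * dist z x : ℝ) : EReal)}

/-- The modulus of identifiability: `liminf_{x → xbar, x ∉ M, f(x) → f(xbar)} |∇f|(x)`. -/
noncomputable def identModulus {X : Type*} [MetricSpace X] (f : X → EReal) (M : Set X)
    (xbar : X) : ℝ≥0∞ :=
  Filter.liminf (slopeM f) (𝓝[Mᶜ] xbar ⊓ Filter.comap f (𝓝 (f xbar)))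

/-- `M` is an identifiable set for `f` at `xbar`: it is closed, contains `xbar`, and the
modulus of identifiability is strictly positive. -/
def Identifiable {X : Type*} [MetricSpace X] (f : X → EReal) (M : Set X) (xbar : X) : Prop :=
  IsClosed M ∧ xbar ∈ M ∧ 0 < identModulus f M xbar

/-!
Ekeland's principle does the work. If `x̄` were not a sharp minimizer with constant `λ / 6`,
there would be points `z → x̄` with `f z < f x̄ + (λ / 6) d(z, x̄)`, while the vanishing slope
gives `f ≥ f x̄ - (λ / 6) d(·, x̄)` near `x̄`. Ekeland's principle with constant `λ`, started
at `z`, then produces `y ≠ x̄` close to `z` that minimizes `f + λ d(·, y)` locally, so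
`|∇f|(y) ≤ λ`, and `f y` is squeezed to `f x̄`. For `λ` below the modulus of identifiability
of `{x̄}` such points cannot exist.
-/

open Set

section Ekeland

variable {Y : Type*} [PseudoMetricSpace Y] {g : Y → ℝ} {lam : ℝ}

def ekelandSet (g : Y → ℝ) (lam : ℝ) (x : Y) : Set Y :=
  {w | g w + lam * dist w x ≤ g x}

lemma self_mem_ekelandSet (x : Y) : x ∈ ekelandSet g lam x := by
  simp [ekelandSet]

lemma ekelandSet_subset (hlam : 0 ≤ lam) {x x' : Y} (hx' : x' ∈ ekelandSet g lam x) :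
    ekelandSet g lam x' ⊆ ekelandSet g lam x := fun w (hw : g w + lam * dist w x' ≤ g x') => by
  have := mul_le_mul_of_nonneg_left (dist_triangle w x' x) hlam
  change g x' + lam * dist x' x ≤ g x at hx'
  change g w + lam * dist w x ≤ g x
  linarith

lemma isClosed_ekelandSet (hg : LowerSemicontinuous g) (x : Y) :
    IsClosed (ekelandSet g lam x) :=
  (hg.add (continuous_const.mul (continuous_id.dist continuous_const)).lowerSemicontinuous)
    |>.isClosed_preimage (g x)

lemma sub_lt_of_mem_ekelandSet (hlam : 0 ≤ lam) (hbdd : BddBelow (range g)) {x x' w : Y}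
    {e : ℝ} (hx' : x' ∈ ekelandSet g lam x) (happrox : g x' < sInf (g '' ekelandSet g lam x) + e)
    (hw : w ∈ ekelandSet g lam x') : g x' - e < g w := by
  have : sInf (g '' ekelandSet g lam x) ≤ g w :=
    csInf_le (hbdd.mono (image_subset_range _ _))
      (mem_image_of_mem _ (ekelandSet_subset hlam hx' hw))
  linarith

theorem LowerSemicontinuous.exists_ekeland [CompleteSpace Y] (hg : LowerSemicontinuous g)
    (hbdd : BddBelow (range g)) (hlam : 0 < lam) (x₀ : Y) :
    ∃ y, g y + lam * dist y x₀ ≤ g x₀ ∧ ∀ w, g y ≤ g w + lam * dist w y := by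
  set S := ekelandSet g lam
  have hnext : ∀ (n : ℕ) (x : Y), ∃ x' ∈ S x, g x' < sInf (g '' S x) + 1 / (n + 1) := by
    intro n x
    obtain ⟨_, ⟨x', hx', rfl⟩, h⟩ :=
      Real.lt_sInf_add_pos ⟨g x, mem_image_of_mem g (self_mem_ekelandSet x)⟩ Nat.one_div_pos_of_nat
    exact ⟨x', hx', h⟩
  choose next hnext_mem hnext_lt using hnext
  -- `u (n + 1) = next n (u n)` is a `1 / (n + 1)`-minimizer of `g` on `S (u n)`.
  let u : ℕ → Y := fun n => Nat.rec x₀ next n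
  have hanti : Antitone fun n => S (u n) :=
    antitone_nat_of_succ_le fun n => ekelandSet_subset hlam.le (hnext_mem n (u n))
  have hmem : ∀ {m n}, n ≤ m → u m ∈ S (u n) := fun h => hanti h (self_mem_ekelandSet _)
  have hclose : ∀ n, ∀ w ∈ S (u (n + 1)), g (u (n + 1)) - 1 / (n + 1) < g w := fun n _ hw =>
    sub_lt_of_mem_ekelandSet hlam.le hbdd (hnext_mem n (u n)) (hnext_lt n (u n)) hw
  have hcauchy : CauchySeq fun n => u (n + 1) := by
    refine cauchySeq_of_le_tendsto_0' (fun n : ℕ => 1 / (n + 1) / lam) (fun n m hnm => ?_) ?_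
    · have hm : g (u (m + 1)) + lam * dist (u (m + 1)) (u (n + 1)) ≤ g (u (n + 1)) :=
        hmem (m := m + 1) (n := n + 1) (by omega)
      have := hclose n _ (hmem (m := m + 1) (n := n + 1) (by omega))
      rw [dist_comm, le_div_iff₀ hlam]
      linarith
    · simpa using tendsto_one_div_add_atTop_nhds_zero_nat.div_const lam
  obtain ⟨y, hy⟩ := cauchySeq_tendsto_of_complete hcauchy
  have hyS : ∀ n, y ∈ S (u n) := fun n =>
    (isClosed_ekelandSet hg _).mem_of_tendsto hy
      (eventually_atTop.2 ⟨n, fun m hm => hmem (m := m + 1) (by omega)⟩)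
  refine ⟨y, hyS 0, fun w => le_of_not_gt fun hw => ?_⟩
  have hwS : ∀ n, w ∈ S (u n) := fun n => ekelandSet_subset hlam.le (hyS n) hw.le
  have hyw : g y ≤ g w := by
    have hlim := tendsto_one_div_add_atTop_nhds_zero_nat.const_add (g w)
    rw [add_zero] at hlim
    refine ge_of_tendsto' hlim fun n => ?_
    have hy' : g y + lam * dist y (u (n + 1)) ≤ g (u (n + 1)) := hyS (n + 1)
    have := hclose n w (hwS (n + 1))
    linarith [mul_nonneg hlam.le (dist_nonneg (x := y) (y := u (n + 1)))]
  linarith [mul_nonneg hlam.le (dist_nonneg (x := w) (y := y))]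

end Ekeland

section EReal

lemma LowerSemicontinuous.toReal_min {Y : Type*} [TopologicalSpace Y] {f : Y → EReal}
    (hf : LowerSemicontinuous f) (hbot : ∀ y, f y ≠ ⊥) (C : ℝ) :
    LowerSemicontinuous fun y => (min (f y) C).toReal := by
  have hcoe : ∀ y, ((min (f y) C).toReal : EReal) = min (f y) C := fun y =>
    EReal.coe_toReal ((min_le_right _ _).trans_lt (EReal.coe_lt_top C)).ne (by simp [hbot y])
  intro y a (ha : a < _)
  rw [← EReal.coe_lt_coe_iff, hcoe] at ha
  filter_upwards [(hf.inf lowerSemicontinuous_const) y a ha] with v (hv : a < min (f v) C)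
  show a < _
  rwa [← EReal.coe_lt_coe_iff, hcoe]

theorem LowerSemicontinuous.exists_ekeland_ereal {Y : Type*} [PseudoMetricSpace Y]
    [CompleteSpace Y] {f : Y → EReal} {lam B : ℝ} (hf : LowerSemicontinuous f)
    (hB : ∀ y, (B : EReal) ≤ f y) (hlam : 0 < lam) {x₀ : Y} (hx₀ : f x₀ ≠ ⊤) :
    ∃ y, f y + ((lam * dist y x₀ : ℝ) : EReal) ≤ f x₀ ∧
      ∀ w, f y ≤ f w + ((lam * dist w y : ℝ) : EReal) := by
  have hbot : ∀ y, f y ≠ ⊥ := fun y => ne_bot_of_le_ne_bot (EReal.coe_ne_bot B) (hB y)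
  obtain ⟨F, hF⟩ : ∃ F : ℝ, f x₀ = F := ⟨_, (EReal.coe_toReal hx₀ (hbot x₀)).symm⟩
  obtain ⟨C, hFC⟩ : ∃ C, F < C := exists_gt F
  set g : Y → ℝ := fun y => (min (f y) (C : EReal)).toReal
  have hcoe : ∀ y, (g y : EReal) = min (f y) C := fun y =>
    EReal.coe_toReal ((min_le_right _ _).trans_lt (EReal.coe_lt_top _)).ne (by simp [hbot y])
  have hgx₀ : g x₀ = F := by
    rw [← EReal.coe_eq_coe_iff, hcoe, hF, min_eq_left (EReal.coe_le_coe_iff.2 hFC.le)]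
  have hBg : ∀ y, B ≤ g y := fun y => by
    rw [← EReal.coe_le_coe_iff, hcoe]
    exact le_min (hB y) ((hB x₀).trans (hF ▸ EReal.coe_le_coe_iff.2 hFC.le))
  obtain ⟨y, hyx₀, hymin⟩ :=
    (hf.toReal_min hbot C).exists_ekeland ⟨B, forall_mem_range.2 hBg⟩ hlam x₀
  have hgy : g y < C := by
    change g y + _ ≤ g x₀ at hyx₀
    rw [hgx₀] at hyx₀
    linarith [mul_nonneg hlam.le (dist_nonneg (x := y) (y := x₀))]
  have hfy : f y = g y := by
    rw [hcoe, eq_comm, min_eq_left_iff]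
    rw [← EReal.coe_lt_coe_iff, hcoe, min_lt_iff] at hgy
    exact (hgy.resolve_right (lt_irrefl _)).le
  refine ⟨y, ?_, fun w => ?_⟩
  · rw [hfy, hF, ← EReal.coe_add, EReal.coe_le_coe_iff, ← hgx₀]
    exact hyx₀
  · calc f y = g y := hfy
      _ ≤ ((g w + lam * dist w y : ℝ) : EReal) := EReal.coe_le_coe_iff.2 (hymin w)
      _ ≤ f w + ((lam * dist w y : ℝ) : EReal) := by
        rw [EReal.coe_add, hcoe]
        exact add_le_add (min_le_left _ _) le_rfl

end EReal

section Slope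

variable {X : Type*} [MetricSpace X] {f : X → EReal} {x : X}

lemma slopeM_le_ofReal {c : ℝ} (hx : f x ≠ ⊤) (hc : 0 < c)
    (h : ∀ᶠ z in 𝓝 x, f x ≤ f z + ((c * dist z x : ℝ) : EReal)) :
    slopeM f x ≤ ENNReal.ofReal c := by
  rw [slopeM, if_neg hx]
  exact sInf_le ⟨c, hc, rfl, h⟩

lemma eventually_le_add_dist_of_slopeM_lt {a : ℝ} (h : slopeM f x < ENNReal.ofReal a) :
    ∀ᶠ z in 𝓝 x, f x ≤ f z + ((a * dist z x : ℝ) : EReal) := by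
  have hx : f x ≠ ⊤ := fun hx => by simp [slopeM, hx] at h
  rw [slopeM, if_neg hx] at h
  obtain ⟨_, ⟨c, hc, rfl, hev⟩, hca⟩ := sInf_lt_iff.1 h
  have hca : c < a := (ENNReal.ofReal_lt_ofReal_iff_of_nonneg hc.le).1 hca
  filter_upwards [hev] with z hz
  exact hz.trans (add_le_add le_rfl (EReal.coe_le_coe_iff.2
    (mul_le_mul_of_nonneg_right hca.le dist_nonneg)))

end Slope

section Sharp

variable {X : Type*} [MetricSpace X] [CompleteSpace X] {f : X → EReal} {x : X} {F lam : ℝ}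

lemma exists_slopeM_le_near (hf : LowerSemicontinuous f) (hF : f x = F) (hlam : 0 < lam) {z : X}
    (hnear : ∀ w, dist w x < 2 * dist z x → (F : EReal) ≤ f w + ((lam / 6 * dist w x : ℝ) : EReal))
    (hz : f z < ((F + lam / 6 * dist z x : ℝ) : EReal)) :
    ∃ y, y ≠ x ∧ dist y x < 2 * dist z x ∧ slopeM f y ≤ ENNReal.ofReal lam ∧
      ((F - lam / 3 * dist z x : ℝ) : EReal) ≤ f y ∧
      f y ≤ ((F + lam / 6 * dist z x : ℝ) : EReal) := by
  have ht : 0 < dist z x := dist_pos.2 fun hzx => by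
    rw [hzx, dist_self, mul_zero, add_zero, hF] at hz
    exact lt_irrefl _ hz
  set t := dist z x
  -- With these constants Ekeland's point `y` stays within `t / 2` of `z`: away from `x`, and
  -- inside the ball where `B` bounds `f` from below.
  set B := F - lam / 3 * t with hB
  have hlow : ∀ w, dist w x < 2 * t → (B : EReal) ≤ f w := fun w hw => by
    have hd : lam / 6 * dist w x ≤ lam / 3 * t := by nlinarith
    rw [EReal.coe_sub,
      EReal.sub_le_iff_le_add (.inl (EReal.coe_ne_bot _)) (.inl (EReal.coe_ne_top _))]
    exact (hnear w hw).trans (add_le_add le_rfl (EReal.coe_le_coe_iff.2 hd))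
  have hmax : ∀ w, dist w x < 2 * t → max (f w) B = f w := fun w hw => max_eq_left (hlow w hw)
  obtain ⟨y, hyz, hymin⟩ := (hf.sup lowerSemicontinuous_const).exists_ekeland_ereal
    (fun w => le_max_right (f w) B) hlam (x₀ := z) (by rw [hmax z (by linarith)]; exact hz.ne_top)
  rw [hmax z (by linarith)] at hyz
  have hdyz : dist y z < t / 2 := by
    have h := (add_le_add (le_max_right (f y) B) le_rfl).trans hyz |>.trans_lt hz
    rw [← EReal.coe_add, EReal.coe_lt_coe_iff, hB] at h
    exact lt_of_mul_lt_mul_left (by linarith) hlam.le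
  have hyx : dist y x < 2 * t := by linarith [dist_triangle y z x]
  rw [hmax y hyx] at hyz hymin
  have hfy : f y ≤ f z := le_of_add_le_of_nonneg_left hyz (EReal.coe_nonneg.2 (by positivity))
  refine ⟨y, fun hyx' => ?_, hyx, slopeM_le_ofReal (hfy.trans_lt hz).ne_top hlam ?_, hlow y hyx,
    hfy.trans hz.le⟩
  · rw [hyx'] at hdyz
    linarith [dist_comm x z]
  · filter_upwards [Metric.ball_mem_nhds y (sub_pos.2 hyx)] with w hw
    rw [← hmax w (by linarith [dist_triangle w y x, Metric.mem_ball.1 hw])]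
    exact hymin w

lemma frequently_slopeM_le_of_frequently_lt (hf : LowerSemicontinuous f) (hF : f x = F)
    (hslope : slopeM f x = 0) (hlam : 0 < lam)
    (hsharp : ∃ᶠ z in 𝓝 x, f z < ((F + lam / 6 * dist z x : ℝ) : EReal)) :
    ∃ᶠ y in 𝓝[{x}ᶜ] x ⊓ comap f (𝓝 (f x)), slopeM f y ≤ ENNReal.ofReal lam := by
  obtain ⟨r, hr, hball⟩ := Metric.eventually_nhds_iff.1 <|
    eventually_le_add_dist_of_slopeM_lt (a := lam / 6)
      (hslope ▸ ENNReal.ofReal_pos.2 (by positivity))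
  set G := 𝓝 x ⊓ 𝓟 {z | f z < ((F + lam / 6 * dist z x : ℝ) : EReal)}
  have : G.NeBot := frequently_iff_neBot.1 hsharp
  have hstep : ∀ᶠ z in G, ∃ y, y ≠ x ∧ dist y x < 2 * dist z x ∧
      slopeM f y ≤ ENNReal.ofReal lam ∧ ((F - lam / 3 * dist z x : ℝ) : EReal) ≤ f y ∧
      f y ≤ ((F + lam / 6 * dist z x : ℝ) : EReal) := by
    filter_upwards [mem_inf_of_left (Metric.ball_mem_nhds x (half_pos hr)),
      mem_inf_of_right (mem_principal_self _)] with z hzr hz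
    refine exists_slopeM_le_near hf hF hlam (fun w hw => hF ▸ hball ?_) hz
    linarith [Metric.mem_ball.1 hzr]
  obtain ⟨y, hy⟩ := hstep.choice
  have hd : Tendsto (fun z => dist z x) G (𝓝 0) := by
    have h := ((tendsto_id (x := 𝓝 x)).dist (tendsto_const_nhds (x := x))).mono_left
      (inf_le_left : G ≤ 𝓝 x)
    rwa [dist_self] at h
  have hlim : ∀ c : ℝ, Tendsto (fun z => ((F + c * dist z x : ℝ) : EReal)) G (𝓝 (f x)) :=
    fun c => hF ▸ EReal.tendsto_coe.2 (by simpa using (hd.const_mul c).const_add F)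
  refine Tendsto.frequently (f := y) ?_ (hy.mono fun z hz => hz.2.2.1).frequently
  refine tendsto_inf.2 ⟨tendsto_nhdsWithin_iff.2 ⟨?_, hy.mono fun z hz => hz.1⟩,
    tendsto_comap_iff.2 ?_⟩
  · exact tendsto_iff_dist_tendsto_zero.2 (squeeze_zero' (.of_forall fun _ => dist_nonneg)
      (hy.mono fun z hz => hz.2.1.le) (by simpa using hd.const_mul 2))
  · refine tendsto_of_tendsto_of_tendsto_of_le_of_le' (hlim (-(lam / 3))) (hlim (lam / 6))
      (hy.mono fun z hz => ?_) (hy.mono fun z hz => hz.2.2.2.2)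
    simpa [sub_eq_add_neg] using hz.2.2.2.1

end Sharp

theorem sharp_minimizer_of_identifiable_singleton_general {X : Type*} [MetricSpace X] [CompleteSpace X]
    (f : X → EReal) (hlsc : LowerSemicontinuous f)
    (xbar : X) (hfin : f xbar ≠ ⊤) (hslope : slopeM f xbar = 0)
    (hsing : Identifiable f {xbar} xbar) :
    ∃ ε : ℝ, 0 < ε ∧ ∀ᶠ z in 𝓝 xbar, f xbar + ((ε * dist z xbar : ℝ) : EReal) ≤ f z := by
  rcases eq_or_ne (f xbar) ⊥ with hbot | hbot
  · exact ⟨1, one_pos, .of_forall fun z => by simp [hbot]⟩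
  obtain ⟨F, hF⟩ : ∃ F : ℝ, f xbar = F := ⟨_, (EReal.coe_toReal hfin hbot).symm⟩
  obtain ⟨ρ, -, hρ, hρκ⟩ := ENNReal.lt_iff_exists_real_btwn.1 hsing.2.2
  have hρ0 : 0 < ρ := ENNReal.ofReal_pos.1 hρ
  refine ⟨ρ / 2 / 6, by positivity, ?_⟩
  by_contra hsharp
  have hfreq := frequently_slopeM_le_of_frequently_lt hlsc hF hslope (half_pos hρ0)
    (by simpa [not_le, hF] using hsharp)
  obtain ⟨y, hy, hρy⟩ := (hfreq.and_eventually (eventually_lt_of_lt_liminf hρκ)).exists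
  exact (hy.trans (ENNReal.ofReal_le_ofReal (half_le_self hρ0.le))).not_gt hρy

/-- Sharp minimizers: if `{xbar}` is identifiable and the slope vanishes at `xbar`,
then `xbar` is a sharp local minimizer. -/
theorem sharp_minimizer_of_identifiable_singleton {X : Type*} [MetricSpace X] [CompleteSpace X]
    (f : X → EReal) (hlsc : LowerSemicontinuous f) (hbot : ∀ z, f z ≠ ⊥)
    (xbar : X) (hfin : f xbar ≠ ⊤) (hslope : slopeM f xbar = 0)
    (hsing : Identifiable f {xbar} xbar) :
    ∃ ε : ℝ, 0 < ε ∧ ∀ᶠ z in 𝓝 xbar, f xbar + ((ε * dist z xbar : ℝ) : EReal) ≤ f z :=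
  sharp_minimizer_of_identifiable_singleton_general f hlsc xbar hfin hslope hsing
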